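/- arXiv:math/0602578 — 2 statements merged into one kernel-verified Lean document; each statement's English description precedes it below -/
import Mathlib

section
/- Let a, b, p, c, d, q be integers. The quotient of ℤ³ by the subgroup generated by (a, b, p) and (c, d, q) is isomorphic to ℤ if and only if gcd(gcd(ad − bc, aq − cp), bq − dp) = 1. -/
/-!
Let `n = u ⨯₃ v` be the vector of `2 × 2` minors of the rows `u`, `v`. Dotting with `n` kills `u`
and `v`. If `e ⬝ᵥ n = 1`, the expansion of `n ⨯₃ (x ⨯₃ e)` writes every `x` orthogonal to `n` as a
combination of `u` and `v`, so `x ↦ x ⬝ᵥ n` identifies the quotient with `ℤ`. Conversely, an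
isomorphism with `ℤ` is `x ↦ x ⬝ᵥ w` for some `w` with `y ⬝ᵥ w = 1` whose kernel is `⟨u, v⟩`.
The vectors `w ⨯₃ x` lie in that kernel, so `(w ⨯₃ x) ⨯₃ (w ⨯₃ z) = (w ⬝ᵥ x ⨯₃ z) • w` is a
multiple of `n`; the coefficients `w ⬝ᵥ x ⨯₃ z` generate the unit ideal, hence `w` itself is a
multiple of `n`, and `y ⬝ᵥ w = 1` makes `n` unimodular.
-/

open Matrix Submodule

section CommRing

variable {R : Type*} [CommRing R]

theorem cross_smul_add_smul (s t s' t' : R) (u v : Fin 3 → R) :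
    (s • u + t • v) ⨯₃ (s' • u + t' • v) = (s * t' - t * s') • u ⨯₃ v := by
  simp only [map_add, map_smul, LinearMap.add_apply, LinearMap.smul_apply, cross_self,
    ← cross_anticomm u v]
  module

theorem cross_mem_span_cross {u v x y : Fin 3 → R} (hx : x ∈ span R {u, v})
    (hy : y ∈ span R {u, v}) : x ⨯₃ y ∈ R ∙ u ⨯₃ v := by
  obtain ⟨s, t, rfl⟩ := mem_span_pair.mp hx
  obtain ⟨s', t', rfl⟩ := mem_span_pair.mp hy
  rw [cross_smul_add_smul]
  exact smul_mem _ _ (mem_span_singleton_self _)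

theorem cross_cross_cross_left (w x y : Fin 3 → R) :
    (w ⨯₃ x) ⨯₃ (w ⨯₃ y) = (w ⬝ᵥ x ⨯₃ y) • w := by
  rw [cross_cross_eq_smul_sub_smul', dot_self_cross, zero_smul, sub_zero, dotProduct_comm,
    triple_product_permutation]

theorem mem_span_pair_of_dotProduct_cross_eq_zero {u v e x : Fin 3 → R}
    (he : e ⬝ᵥ u ⨯₃ v = 1) (hx : x ⬝ᵥ u ⨯₃ v = 0) : x ∈ span R {u, v} := by
  have hx_eq : x = (u ⬝ᵥ x ⨯₃ e) • v - (v ⬝ᵥ x ⨯₃ e) • u := by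
    rw [← cross_cross_eq_smul_sub_smul, cross_cross_eq_smul_sub_smul', dotProduct_comm _ e, he,
      hx, one_smul, zero_smul, sub_zero]
  rw [hx_eq, mem_span_pair]
  exact ⟨-(v ⬝ᵥ x ⨯₃ e), u ⬝ᵥ x ⨯₃ e, by module⟩

theorem mem_span_cross_of_ker_dotProduct_le {u v w y : Fin 3 → R} (hy : y ⬝ᵥ w = 1)
    (hker : ∀ x, x ⬝ᵥ w = 0 → x ∈ span R {u, v}) : w ∈ R ∙ u ⨯₃ v := by
  have hmem : ∀ x z, (w ⬝ᵥ x ⨯₃ z) • w ∈ R ∙ u ⨯₃ v := fun x z => by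
    have hperp : ∀ x', w ⨯₃ x' ∈ span R {u, v} := fun x' =>
      hker _ (by rw [dotProduct_comm, dot_self_cross])
    rw [← cross_cross_cross_left]
    exact cross_mem_span_cross (hperp x) (hperp z)
  have hdot : y ⬝ᵥ w = y 0 * (w ⬝ᵥ ![0, 1, 0] ⨯₃ ![0, 0, 1])
      + y 1 * (w ⬝ᵥ ![0, 0, 1] ⨯₃ ![1, 0, 0]) + y 2 * (w ⬝ᵥ ![1, 0, 0] ⨯₃ ![0, 1, 0]) := by
    simp [cross_apply, vec3_dotProduct, vecHead, vecTail]
  rw [← one_smul R w, ← hy, hdot, add_smul, add_smul, mul_smul, mul_smul, mul_smul]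
  exact add_mem (add_mem (smul_mem _ _ (hmem _ _)) (smul_mem _ _ (hmem _ _)))
    (smul_mem _ _ (hmem _ _))

theorem exists_dotProduct_cross_eq_one {u v w y : Fin 3 → R} (hy : y ⬝ᵥ w = 1)
    (hker : ∀ x, x ⬝ᵥ w = 0 → x ∈ span R {u, v}) : ∃ z, z ⬝ᵥ u ⨯₃ v = 1 := by
  obtain ⟨m, rfl⟩ := mem_span_singleton.mp (mem_span_cross_of_ker_dotProduct_le hy hker)
  exact ⟨m • y, by rwa [smul_dotProduct, ← dotProduct_smul]⟩

end CommRing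

theorem nonempty_quotient_addEquiv_iff {G A : Type*} [AddCommGroup G] [AddGroup A]
    (H : AddSubgroup G) :
    Nonempty (G ⧸ H ≃+ A) ↔ ∃ f : G →+ A, Function.Surjective f ∧ f.ker = H := by
  constructor
  · rintro ⟨e⟩
    refine ⟨e.toAddMonoidHom.comp (QuotientAddGroup.mk' H),
      e.surjective.comp (QuotientAddGroup.mk'_surjective H), ?_⟩
    ext x
    simp
  · rintro ⟨f, hf, rfl⟩
    exact ⟨QuotientAddGroup.quotientKerEquivOfSurjective f hf⟩

theorem AddMonoidHom.apply_eq_dotProduct {n : Type*} [Fintype n] [DecidableEq n]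
    (f : (n → ℤ) →+ ℤ) (x : n → ℤ) : f x = x ⬝ᵥ fun i => f (Pi.single i 1) := by
  conv_lhs => rw [← Finset.univ_sum_single x]
  refine (map_sum f _ _).trans (Finset.sum_congr rfl fun i _ => ?_)
  rw [← smul_eq_mul, ← map_zsmul, ← Pi.single_smul, smul_eq_mul, mul_one]

theorem nonempty_quotient_closure_pair_addEquiv_int_iff (u v : Fin 3 → ℤ) :
    Nonempty ((Fin 3 → ℤ) ⧸ AddSubgroup.closure {u, v} ≃+ ℤ) ↔ ∃ e, e ⬝ᵥ u ⨯₃ v = 1 := by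
  have hspan : ∀ x, x ∈ AddSubgroup.closure {u, v} ↔ x ∈ span ℤ {u, v} := fun x => by
    rw [← span_int_eq_addSubgroupClosure]
    rfl
  rw [nonempty_quotient_addEquiv_iff]
  constructor
  · rintro ⟨f, hf, hker⟩
    obtain ⟨y, hy⟩ := hf 1
    refine exists_dotProduct_cross_eq_one (w := fun i => f (Pi.single i 1)) (y := y) ?_
      fun x hx => ?_
    · rwa [← f.apply_eq_dotProduct]
    · rw [← hspan, ← hker, AddMonoidHom.mem_ker, f.apply_eq_dotProduct, hx]
  · rintro ⟨e, he⟩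
    refine ⟨AddMonoidHom.mk' (· ⬝ᵥ u ⨯₃ v) fun x y => add_dotProduct x y _, fun k => ⟨k • e, ?_⟩,
      le_antisymm (fun x hx => ?_) ?_⟩
    · simp only [AddMonoidHom.mk'_apply, smul_dotProduct, he, smul_eq_mul, mul_one]
    · exact (hspan x).mpr (mem_span_pair_of_dotProduct_cross_eq_zero he hx)
    · rw [AddSubgroup.closure_le, Set.insert_subset_iff, Set.singleton_subset_iff]
      exact ⟨dot_self_cross u v, dot_cross_self u v⟩

theorem Int.gcd_gcd_eq_one_iff {x y z : ℤ} :
    Int.gcd (Int.gcd x y) z = 1 ↔ ∃ r s t, r * x + s * y + t * z = 1 := by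
  constructor
  · intro h
    obtain ⟨α, β, hαβ⟩ := Int.isCoprime_iff_gcd_eq_one.mpr h
    refine ⟨α * x.gcdA y, α * x.gcdB y, β, ?_⟩
    linear_combination hαβ - α * Int.gcd_eq_gcd_ab x y
  · rintro ⟨r, s, t, h⟩
    have hx := (Int.gcd_dvd_left (Int.gcd x y) z).trans (Int.gcd_dvd_left x y)
    have hy := (Int.gcd_dvd_left (Int.gcd x y) z).trans (Int.gcd_dvd_right x y)
    have hdvd : (Int.gcd (Int.gcd x y) z : ℤ) ∣ 1 := h ▸
      (((hx.mul_left r).add (hy.mul_left s)).add ((Int.gcd_dvd_right _ z).mul_left t))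
    exact_mod_cast Int.eq_one_of_dvd_one (Int.natCast_nonneg _) hdvd

theorem exists_dotProduct_cross_eq_one_iff_gcd (a b p c d q : ℤ) :
    (∃ e, e ⬝ᵥ ![a, b, p] ⨯₃ ![c, d, q] = 1) ↔
      Int.gcd (Int.gcd (a * d - b * c) (a * q - c * p)) (b * q - d * p) = 1 := by
  simp only [cross_apply, vec3_dotProduct, Fin.isValue, cons_val]
  rw [Int.gcd_gcd_eq_one_iff]
  constructor
  · rintro ⟨e, he⟩
    exact ⟨e 2, -e 1, e 0, by linear_combination he⟩
  · rintro ⟨r, s, t, h⟩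
    refine ⟨![t, -s, r], ?_⟩
    simp only [Fin.isValue, cons_val_zero, cons_val_one, neg_mul, cons_val]
    linear_combination h

def finThreeArrowAddEquiv (M : Type*) [AddCommMonoid M] : (Fin 3 → M) ≃+ M × M × M where
  toFun v := (v 0, v 1, v 2)
  invFun x := ![x.1, x.2.1, x.2.2]
  left_inv v := by ext i; fin_cases i <;> rfl
  right_inv _ := rfl
  map_add' _ _ := rfl

/-- `ℤ³/⟨(a,b,p),(c,d,q)⟩ ≅ ℤ` iff the gcd of the 2×2 minors equals 1. -/
theorem stmt_6 (a b p c d q : ℤ) :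
    Nonempty (((ℤ × ℤ × ℤ) ⧸
        AddSubgroup.closure {((a, b, p) : ℤ × ℤ × ℤ), ((c, d, q) : ℤ × ℤ × ℤ)}) ≃+ ℤ) ↔
      Int.gcd (Int.gcd (a * d - b * c) (a * q - c * p)) (b * q - d * p) = 1 := by
  have hmap : (AddSubgroup.closure {((a, b, p) : ℤ × ℤ × ℤ), (c, d, q)}).map
      (finThreeArrowAddEquiv ℤ).symm.toAddMonoidHom =
        AddSubgroup.closure {![a, b, p], ![c, d, q]} := by
    rw [AddMonoidHom.map_closure, Set.image_pair]
    rfl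
  let E := QuotientAddGroup.congr _ _ (finThreeArrowAddEquiv ℤ).symm hmap
  rw [← exists_dotProduct_cross_eq_one_iff_gcd, ← nonempty_quotient_closure_pair_addEquiv_int_iff]
  exact ⟨fun ⟨f⟩ => ⟨E.symm.trans f⟩, fun ⟨f⟩ => ⟨E.trans f⟩⟩
end

section
/- Let A ∈ SL(3,ℤ) be such that gcd(A₁₃, A₂₃) = 1. Then there exist matrices L and R in SL(3,ℤ), each of the form [[r, t, 0], [s, u, 0], [v, w, 1]], and a matrix B ∈ SL(3,ℤ) of the form [[a, c, 1], [b, d, 0], [0, 0, 1]] with ad − bc = 1, such that A = L · B · R. -/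
/-- If `A ∈ SL(3,ℤ)` has `gcd(A₁₃, A₂₃) = 1`, then `A = L·B·R` with `L, R` of the extendable
form `[[r,t,0],[s,u,0],[v,w,1]]` and `B` of the standard form `[[a,c,1],[b,d,0],[0,0,1]]`
with `ad − bc = 1`. -/
theorem stmt_11 (A : Matrix.SpecialLinearGroup (Fin 3) ℤ)
    (h : Int.gcd ((A : Matrix (Fin 3) (Fin 3) ℤ) 0 2) ((A : Matrix (Fin 3) (Fin 3) ℤ) 1 2) = 1) :
    ∃ L B R : Matrix.SpecialLinearGroup (Fin 3) ℤ,
      ((L : Matrix (Fin 3) (Fin 3) ℤ) 0 2 = 0 ∧ (L : Matrix (Fin 3) (Fin 3) ℤ) 1 2 = 0 ∧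
        (L : Matrix (Fin 3) (Fin 3) ℤ) 2 2 = 1) ∧
      ((R : Matrix (Fin 3) (Fin 3) ℤ) 0 2 = 0 ∧ (R : Matrix (Fin 3) (Fin 3) ℤ) 1 2 = 0 ∧
        (R : Matrix (Fin 3) (Fin 3) ℤ) 2 2 = 1) ∧
      ((B : Matrix (Fin 3) (Fin 3) ℤ) 0 2 = 1 ∧ (B : Matrix (Fin 3) (Fin 3) ℤ) 1 2 = 0 ∧
        (B : Matrix (Fin 3) (Fin 3) ℤ) 2 0 = 0 ∧ (B : Matrix (Fin 3) (Fin 3) ℤ) 2 1 = 0 ∧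
        (B : Matrix (Fin 3) (Fin 3) ℤ) 2 2 = 1 ∧
        (B : Matrix (Fin 3) (Fin 3) ℤ) 0 0 * (B : Matrix (Fin 3) (Fin 3) ℤ) 1 1 -
          (B : Matrix (Fin 3) (Fin 3) ℤ) 1 0 * (B : Matrix (Fin 3) (Fin 3) ℤ) 0 1 = 1) ∧
      A = L * B * R := by
  have A' : Matrix (Fin 3) (Fin 3) ℤ := (A : Matrix (Fin 3) (Fin 3) ℤ)
  obtain ⟨x, y, hxy⟩ : IsCoprime ((A : Matrix (Fin 3) (Fin 3) ℤ) 0 2)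
      ((A : Matrix (Fin 3) (Fin 3) ℤ) 1 2) := Int.isCoprime_iff_gcd_eq_one.mpr h
  set M : Matrix (Fin 3) (Fin 3) ℤ := (A : Matrix (Fin 3) (Fin 3) ℤ) with hM
  have hxy' : x * M 0 2 + y * M 1 2 = 1 := hxy
  set p := M 0 2 with hp
  set q := M 1 2 with hq
  set r := M 2 2 with hr
  set c0 : ℤ := (1-r)*x*M 0 0 + (1-r)*y*M 1 0 + M 2 0 with hc0
  set c1 : ℤ := (1-r)*x*M 0 1 + (1-r)*y*M 1 1 + M 2 1 with hc1
  set Lmat : Matrix (Fin 3) (Fin 3) ℤ := !![p, -y, 0; q, x, 0; r-1, 0, 1] with hLmat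
  set Linv : Matrix (Fin 3) (Fin 3) ℤ := !![x, y, 0; -q, p, 0; (1-r)*x, (1-r)*y, 1] with hLinv
  set Rmat : Matrix (Fin 3) (Fin 3) ℤ := !![1,0,0;0,1,0;c0,c1,1] with hRmat
  set Rinv : Matrix (Fin 3) (Fin 3) ℤ := !![1,0,0;0,1,0;-c0,-c1,1] with hRinv
  have hdetL : Lmat.det = 1 := by
    rw [hLmat, Matrix.det_fin_three]
    simp only [Matrix.cons_val', Matrix.cons_val_zero, Matrix.empty_val',
      Matrix.cons_val_fin_one, Matrix.cons_val_one, Matrix.head_cons, Matrix.head_fin_const,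
      Matrix.cons_val_two, Matrix.tail_cons, Matrix.of_apply]
    linear_combination hxy'
  have hdetR : Rmat.det = 1 := by
    rw [hRmat, Matrix.det_fin_three]
    simp only [Matrix.cons_val', Matrix.cons_val_zero, Matrix.empty_val',
      Matrix.cons_val_fin_one, Matrix.cons_val_one, Matrix.head_cons, Matrix.head_fin_const,
      Matrix.cons_val_two, Matrix.tail_cons, Matrix.of_apply]
    ring
  have hdetLinv : Linv.det = 1 := by
    rw [hLinv, Matrix.det_fin_three]
    simp only [Matrix.cons_val', Matrix.cons_val_zero, Matrix.empty_val',
      Matrix.cons_val_fin_one, Matrix.cons_val_one, Matrix.head_cons, Matrix.head_fin_const,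
      Matrix.cons_val_two, Matrix.tail_cons, Matrix.of_apply]
    linear_combination hxy'
  have hdetRinv : Rinv.det = 1 := by
    rw [hRinv, Matrix.det_fin_three]
    simp only [Matrix.cons_val', Matrix.cons_val_zero, Matrix.empty_val',
      Matrix.cons_val_fin_one, Matrix.cons_val_one, Matrix.head_cons, Matrix.head_fin_const,
      Matrix.cons_val_two, Matrix.tail_cons, Matrix.of_apply]
    ring
  have hdetA : M.det = 1 := A.2
  set Bmat : Matrix (Fin 3) (Fin 3) ℤ := Linv * M * Rinv with hBmat
  have hdetB : Bmat.det = 1 := by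
    rw [hBmat, Matrix.det_mul, Matrix.det_mul, hdetLinv, hdetA, hdetRinv]; ring
  have tri : ∀ i j : Fin 3, Bmat i j =
      (Linv i 0 * M 0 0 + Linv i 1 * M 1 0 + Linv i 2 * M 2 0) * Rinv 0 j +
      (Linv i 0 * M 0 1 + Linv i 1 * M 1 1 + Linv i 2 * M 2 1) * Rinv 1 j +
      (Linv i 0 * M 0 2 + Linv i 1 * M 1 2 + Linv i 2 * M 2 2) * Rinv 2 j := by
    intro i j
    rw [hBmat]
    simp only [Matrix.mul_apply, Fin.sum_univ_three, Finset.sum_mul]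
  have entry : ∀ (i j : Fin 3) (v : ℤ),
      (Linv i 0 * M 0 0 + Linv i 1 * M 1 0 + Linv i 2 * M 2 0) * Rinv 0 j +
      (Linv i 0 * M 0 1 + Linv i 1 * M 1 1 + Linv i 2 * M 2 1) * Rinv 1 j +
      (Linv i 0 * M 0 2 + Linv i 1 * M 1 2 + Linv i 2 * M 2 2) * Rinv 2 j = v →
      Bmat i j = v := fun i j v hv => (tri i j).trans hv
  have simpL : ∀ st : Prop, st = st := fun _ => rfl
  have h02 : Bmat 0 2 = 1 := by
    apply entry
    simp only [hLinv, hRinv, Matrix.cons_val', Matrix.cons_val_zero, Matrix.empty_val',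
      Matrix.cons_val_fin_one, Matrix.cons_val_one, Matrix.head_cons, Matrix.head_fin_const,
      Matrix.cons_val_two, Matrix.tail_cons, Matrix.of_apply]
    linear_combination hxy'
  have h12 : Bmat 1 2 = 0 := by
    apply entry
    simp only [hLinv, hRinv, Matrix.cons_val', Matrix.cons_val_zero, Matrix.empty_val',
      Matrix.cons_val_fin_one, Matrix.cons_val_one, Matrix.head_cons, Matrix.head_fin_const,
      Matrix.cons_val_two, Matrix.tail_cons, Matrix.of_apply]
    ring
  have h22 : Bmat 2 2 = 1 := by
    apply entry
    simp only [hLinv, hRinv, Matrix.cons_val', Matrix.cons_val_zero, Matrix.empty_val',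
      Matrix.cons_val_fin_one, Matrix.cons_val_one, Matrix.head_cons, Matrix.head_fin_const,
      Matrix.cons_val_two, Matrix.tail_cons, Matrix.of_apply]
    linear_combination (1 - r) * hxy'
  have h20 : Bmat 2 0 = 0 := by
    apply entry
    simp only [hLinv, hRinv, Matrix.cons_val', Matrix.cons_val_zero, Matrix.empty_val',
      Matrix.cons_val_fin_one, Matrix.cons_val_one, Matrix.head_cons, Matrix.head_fin_const,
      Matrix.cons_val_two, Matrix.tail_cons, Matrix.of_apply]
    linear_combination ((r - 1) * c0) * hxy'
  have h21 : Bmat 2 1 = 0 := by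
    apply entry
    simp only [hLinv, hRinv, Matrix.cons_val', Matrix.cons_val_zero, Matrix.empty_val',
      Matrix.cons_val_fin_one, Matrix.cons_val_one, Matrix.head_cons, Matrix.head_fin_const,
      Matrix.cons_val_two, Matrix.tail_cons, Matrix.of_apply]
    linear_combination ((r - 1) * c1) * hxy'
  have h2x2 : Bmat 0 0 * Bmat 1 1 - Bmat 1 0 * Bmat 0 1 = 1 := by
    have hd := hdetB
    rw [Matrix.det_fin_three, h02, h12, h20, h21, h22] at hd
    linarith
  have mul3 : ∀ (X Y : Matrix (Fin 3) (Fin 3) ℤ) (i j : Fin 3),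
      (X * Y) i j = X i 0 * Y 0 j + X i 1 * Y 1 j + X i 2 * Y 2 j := by
    intros; rw [Matrix.mul_apply, Fin.sum_univ_three]
  have hLL : Lmat * Linv = 1 := by
    ext i j
    rw [mul3, hLmat, hLinv]
    fin_cases i <;> fin_cases j <;> simp <;>
      first
        | ring1
        | linear_combination hxy'
        | linear_combination (-1 : ℤ) * hxy'
  have hRR : Rinv * Rmat = 1 := by
    ext i j
    rw [mul3, hRmat, hRinv]
    fin_cases i <;> fin_cases j <;> simp <;> ring
  refine ⟨⟨Lmat, hdetL⟩, ⟨Bmat, hdetB⟩, ⟨Rmat, hdetR⟩, ⟨?_, ?_, ?_⟩, ⟨?_, ?_, ?_⟩,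
    ⟨h02, h12, h20, h21, h22, h2x2⟩, ?_⟩
  · simp [hLmat]
  · simp [hLmat]
  · simp [hLmat]
  · simp [hRmat]
  · simp [hRmat]
  · simp [hRmat]
  · apply Subtype.ext
    show M = Lmat * Bmat * Rmat
    rw [hBmat]
    rw [Matrix.mul_assoc Linv, ← Matrix.mul_assoc Lmat, hLL, Matrix.one_mul,
      Matrix.mul_assoc, hRR, Matrix.mul_one]
end
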